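/- arXiv:2312.07962 — 6 statements merged into one kernel-verified Lean document; each statement's English description precedes it below -/
import Mathlib

section
/- Let G be a finite simple graph and let 𝒫 = {P₁,…,P_h} be a partition of V(G) such that each part P_i is connected in G and has at most p vertices. Then tw(G/𝒫) ≥ tw(G)/p, where G/𝒫 is the quotient graph obtained by contracting each part to a single vertex. Equivalently, p·(tw(G/𝒫)+1) ≥ tw(G)+1. -/
open SimpleGraph

/-- Maximum degree of a graph on a finite vertex type. -/
noncomputable def maxDeg {V : Type} (G : SimpleGraph V) : ℕ :=
  sSup {d | ∃ v : V, (G.neighborSet v).ncard = d}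

/-- `G` has a tree-decomposition of width at most `w`. -/
def HasTreewidthAtMost {V : Type} (G : SimpleGraph V) (w : ℕ) : Prop :=
  ∃ (ι : Type) (T : SimpleGraph ι) (B : ι → Set V),
    T.Connected ∧ T.IsAcyclic ∧
    (∀ v : V, ∃ i, v ∈ B i) ∧
    (∀ u v : V, G.Adj u v → ∃ i, u ∈ B i ∧ v ∈ B i) ∧
    (∀ v : V, (T.induce {i | v ∈ B i}).Connected) ∧
    (∀ i, (B i).ncard ≤ w + 1)

/-- Treewidth. -/
noncomputable def treewidth {V : Type} (G : SimpleGraph V) : ℕ :=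
  sInf {w | HasTreewidthAtMost G w}

/-- The quotient of `G` by the partition given by the fibers of `f`. -/
def quotGraph {V ι : Type} (G : SimpleGraph V) (f : V → ι) : SimpleGraph ι :=
  SimpleGraph.fromRel (fun i j => ∃ u v : V, f u = i ∧ f v = j ∧ G.Adj u v)

/-- `H` is an induced minor of `G` (branch-set model). -/
def IsInducedMinor {W V : Type} (H : SimpleGraph W) (G : SimpleGraph V) : Prop :=
  ∃ B : W → Set V,
    (∀ w, (B w).Nonempty) ∧
    (∀ w, (G.induce (B w)).Connected) ∧
    (∀ w w', w ≠ w' → Disjoint (B w) (B w')) ∧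
    (∀ w w', w ≠ w' →
      (H.Adj w w' ↔ ∃ u ∈ B w, ∃ v ∈ B w', G.Adj u v))

/-- `H` is a minor of `G` (branch-set model). -/
def IsMinor {W V : Type} (H : SimpleGraph W) (G : SimpleGraph V) : Prop :=
  ∃ B : W → Set V,
    (∀ w, (B w).Nonempty) ∧
    (∀ w, (G.induce (B w)).Connected) ∧
    (∀ w w', w ≠ w' → Disjoint (B w) (B w')) ∧
    (∀ w w', H.Adj w w' → ∃ u ∈ B w, ∃ v ∈ B w', G.Adj u v)

/-- Planarity via Wagner's theorem: no `K₅` and no `K₃,₃` minor. -/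
def IsPlanar {V : Type} (G : SimpleGraph V) : Prop :=
  ¬ IsMinor (⊤ : SimpleGraph (Fin 5)) G ∧
  ¬ IsMinor (completeBipartiteGraph (Fin 3) (Fin 3)) G

/-- The 1-subdivision of a graph: each edge is replaced by a path of length 2. -/
def oneSubdivision {V : Type} (G : SimpleGraph V) : SimpleGraph (V ⊕ G.edgeSet) :=
  SimpleGraph.fromRel (fun a b =>
    ∃ (v : V) (e : G.edgeSet), v ∈ (e : Sym2 V) ∧ a = Sum.inl v ∧ b = Sum.inr e)

/-- Every connected component of the spanning subgraph with edge set `F` that contains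
an edge of `F` has at most `c` vertices. -/
def HasClusteredComponents {V : Type} (F : Set (Sym2 V)) (c : ℕ) : Prop :=
  ∀ v : V, (∃ e ∈ F, v ∈ e) →
    {u | (SimpleGraph.fromEdgeSet F).Reachable v u}.ncard ≤ c

/-- `F` is a partition of the edge set of `G` into `h` (possibly empty) classes. -/
def IsEdgePartition {V : Type} (G : SimpleGraph V) {h : ℕ} (F : Fin h → Set (Sym2 V)) : Prop :=
  (∀ i, F i ⊆ G.edgeSet) ∧ (∀ e ∈ G.edgeSet, ∃! i, e ∈ F i)

/-- Chekuri–Chuzhoy degree-3 treewidth sparsifier, with constant `δ`. -/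
def SparsifierHyp (δ : ℝ) : Prop :=
  ∀ (V : Type) [Fintype V] (H : SimpleGraph V),
    ∃ H' : SimpleGraph V, H' ≤ H ∧ maxDeg H' ≤ 3 ∧
      (treewidth H : ℝ) / Real.log (treewidth H) ^ δ ≤ (treewidth H' : ℝ)

/-- Korhonen's theorem, with constant `γ`: a graph excluding some `k`-vertex planar graph
as an induced minor has treewidth at most `k^γ · 2^(Δ^5)`. -/
def KorhonenHyp (γ : ℝ) : Prop :=
  ∀ (V : Type) [Fintype V] (G : SimpleGraph V) (k : ℕ),
    (∃ H : SimpleGraph (Fin k), IsPlanar H ∧ ¬ IsInducedMinor H G) →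
    (treewidth G : ℝ) ≤ (k : ℝ) ^ γ * 2 ^ ((maxDeg G : ℝ) ^ 5)

/-- The graph `G` restricted to the vertex set `S` (kept on the same vertex type). -/
def within {V : Type} (G : SimpleGraph V) (S : Set V) : SimpleGraph V :=
  SimpleGraph.fromRel (fun a b => a ∈ S ∧ b ∈ S ∧ G.Adj a b)

/-- `IterDepthLE G h d S n` : the iterated-BFS process of width `h`, stopping at weak
diameter at most `d` (measured in `G`), applied to the vertex set `S`, has depth at most `n`
(whatever the choices of BFS roots). -/
inductive IterDepthLE {V : Type} (G : SimpleGraph V) (h d : ℕ) : Set V → ℕ → Prop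
  | base (S : Set V) (n : ℕ) :
      (∀ u ∈ S, ∀ v ∈ S, G.dist u v ≤ d) → IterDepthLE G h d S n
  | step (S : Set V) (n : ℕ) :
      (∀ v ∈ S, ∀ i : ℕ,
        IterDepthLE G h d
          {u | u ∈ S ∧ (within G S).Reachable v u ∧
               i ≤ (within G S).dist v u ∧ (within G S).dist v u < i + h} n) →
      IterDepthLE G h d S (n + 1)

/-- `G` has a tree-partition of width at most `w`. -/
def HasTpwAtMost {V : Type} (G : SimpleGraph V) (w : ℕ) : Prop :=
  ∃ (ι : Type) (T : SimpleGraph ι) (B : ι → Set V),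
    T.Connected ∧ T.IsAcyclic ∧
    (∀ v : V, ∃! x, v ∈ B x) ∧
    (∀ u v : V, G.Adj u v → ∃ x y, (x = y ∨ T.Adj x y) ∧ u ∈ B x ∧ v ∈ B y) ∧
    (∀ x, (B x).ncard ≤ w)

/-- Tree-partition width. -/
noncomputable def tpw {V : Type} (G : SimpleGraph V) : ℕ :=
  sInf {w | HasTpwAtMost G w}

/-- The strong product of two graphs. -/
def strongProd {α β : Type} (G : SimpleGraph α) (H : SimpleGraph β) :
    SimpleGraph (α × β) :=
  SimpleGraph.fromRel (fun x y =>
    (x.1 = y.1 ∨ G.Adj x.1 y.1) ∧ (x.2 = y.2 ∨ H.Adj x.2 y.2))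

/-- The Pohoata–Davies `n × n` grid: the `n × n` grid with vertical edges removed and an
apex vertex added for each column, adjacent to all vertices of that column.  A grid vertex
`(i, j)` lies in column `i` and row `j`. -/
def pdGrid (n : ℕ) : SimpleGraph ((Fin n × Fin n) ⊕ Fin n) :=
  SimpleGraph.fromRel (fun a b =>
    (∃ (i j : Fin n) (hi : (i : ℕ) + 1 < n),
      a = Sum.inl (i, j) ∧ b = Sum.inl (⟨(i : ℕ) + 1, hi⟩, j)) ∨
    (∃ i j : Fin n, a = Sum.inr i ∧ b = Sum.inl (i, j)))

lemma Set.ncard_preimage_le_mul {α β : Type*} [Finite β] (f : α → β) {p : ℕ}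
    (hsize : ∀ b : β, (f ⁻¹' {b}).ncard ≤ p) (S : Set β) :
    (f ⁻¹' S).ncard ≤ p * S.ncard := by
  have hS := S.toFinite
  calc (f ⁻¹' S).ncard = (⋃ i ∈ hS.toFinset, f ⁻¹' {i}).ncard := by
        simp only [Set.Finite.mem_toFinset, Set.biUnion_preimage_singleton]
    _ ≤ ∑ i ∈ hS.toFinset, (f ⁻¹' {i}).ncard := Finset.set_ncard_biUnion_le _ _
    _ ≤ ∑ i ∈ hS.toFinset, p := Finset.sum_le_sum fun i _ => hsize i
    _ = p * S.ncard := by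
        rw [Finset.sum_const, smul_eq_mul, mul_comm, Set.ncard_eq_toFinset_card S hS]

lemma hasTreewidthAtMost_card {V : Type} [Finite V] (G : SimpleGraph V) :
    HasTreewidthAtMost G (Nat.card V) := by
  have hpoint {W : Type} [Subsingleton W] (H : SimpleGraph W) (w : W) : H.Connected :=
    (connected_iff H).mpr ⟨.of_subsingleton, ⟨w⟩⟩
  refine ⟨PUnit, ⊥, fun _ => Set.univ, hpoint _ .unit, isAcyclic_bot, fun _ => ⟨.unit, trivial⟩,
    fun _ _ _ => ⟨.unit, trivial, trivial⟩, fun _ => hpoint _ ⟨.unit, trivial⟩, fun _ => ?_⟩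
  rw [Set.ncard_univ]
  exact Nat.le_succ _

lemma hasTreewidthAtMost_treewidth {V : Type} [Finite V] (G : SimpleGraph V) :
    HasTreewidthAtMost G (treewidth G) :=
  Nat.sInf_mem (s := {w | HasTreewidthAtMost G w}) ⟨_, hasTreewidthAtMost_card G⟩

lemma treewidth_le {V : Type} {G : SimpleGraph V} {w : ℕ} (h : HasTreewidthAtMost G w) :
    treewidth G ≤ w :=
  Nat.sInf_le h

/-- Pulling the bags of a tree-decomposition of `G/𝒫` back along `f` gives one of `G`:
the bags containing `v` are exactly those containing the part `f v`. -/
lemma HasTreewidthAtMost.of_quotGraph {V ι : Type} [Finite ι] {G : SimpleGraph V} {f : V → ι}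
    {p w k : ℕ} (h : HasTreewidthAtMost (quotGraph G f) w)
    (hsize : ∀ i : ι, (f ⁻¹' {i}).ncard ≤ p) (hk : p * (w + 1) ≤ k + 1) :
    HasTreewidthAtMost G k := by
  obtain ⟨κ, T, B, hTconn, hTacyc, hcover, hedge, hsubtree, hbags⟩ := h
  refine ⟨κ, T, fun x => f ⁻¹' B x, hTconn, hTacyc, fun v => hcover (f v), ?_,
    fun v => hsubtree (f v), fun x => ?_⟩
  · intro u v huv
    by_cases hfuv : f u = f v
    · obtain ⟨x, hx⟩ := hcover (f v)
      exact ⟨x, by simpa [hfuv] using hx, hx⟩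
    · exact hedge _ _ ⟨hfuv, .inl ⟨u, v, rfl, rfl, huv⟩⟩
  · calc (f ⁻¹' B x).ncard ≤ p * (B x).ncard := Set.ncard_preimage_le_mul f hsize _
      _ ≤ p * (w + 1) := Nat.mul_le_mul_left p (hbags x)
      _ ≤ k + 1 := hk

theorem stmt1_general {V ι : Type} [Fintype ι] (G : SimpleGraph V) (p : ℕ)
    (hp : 1 ≤ p) (f : V → ι)
    (hsize : ∀ i : ι, (f ⁻¹' {i}).ncard ≤ p) :
    treewidth G + 1 ≤ p * (treewidth (quotGraph G f) + 1) := by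
  have hpos : 0 < p * (treewidth (quotGraph G f) + 1) := Nat.mul_pos hp (Nat.succ_pos _)
  have hG : treewidth G ≤ p * (treewidth (quotGraph G f) + 1) - 1 :=
    treewidth_le <| (hasTreewidthAtMost_treewidth _).of_quotGraph hsize (by omega)
  omega

/-- contracting a partition into connected parts of size at most `p`
divides the treewidth by at most `p`:  `p·(tw(G/𝒫)+1) ≥ tw(G)+1`. -/
theorem stmt1 {V ι : Type} [Fintype V] [Fintype ι] (G : SimpleGraph V) (p : ℕ)
    (hp : 1 ≤ p) (f : V → ι) (hsurj : Function.Surjective f)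
    (hconn : ∀ i : ι, (G.induce (f ⁻¹' {i})).Connected)
    (hsize : ∀ i : ι, (f ⁻¹' {i}).ncard ≤ p) :
    treewidth G + 1 ≤ p * (treewidth (quotGraph G f) + 1) :=
  stmt1_general G p hp f hsize
end

section
/- Fix a positive integer h. Let G be a connected finite simple graph and ℒ its BFS layering from a vertex v. Let G′ be a subgraph of G induced by h consecutive layers of ℒ, and let ℒ′ = {L′₀,…,L′_s} be a BFS layering of (a connected component of) G′ from a vertex v′. Then for every vertex w ∈ L′_ℓ, the unique path P from v to w in a BFS tree of ℒ intersects only layers L′_j of ℒ′ with j ∈ [ℓ−h+1, ℓ+h−1], and at most the last h vertices of P lie in V(G′). -/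
open SimpleGraph

/-- control given by two nested BFSes (Klein–Plotkin–Rao key lemma).
`S` is the set of vertices in `h` consecutive BFS layers (from `v`) of the connected
graph `G`, `parent` encodes a BFS tree of the layering from `v`, and distances inside
`G.induce S` give the second BFS layering from `v'`.  For `w` in layer `ℓ` of the second
BFS, every vertex `parent^[m] w` of the tree path from `v` to `w` that lies in `S`
satisfies `m < h` (only the last `h` vertices of the path are in `S`) and its second-BFS
layer index lies in `[ℓ-h+1, ℓ+h-1]`. -/
theorem stmt4 {V : Type} (G : SimpleGraph V) (hG : G.Connected) (v : V)
    (h a : ℕ) (hh : 1 ≤ h)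
    (parent : V → V) (hroot : parent v = v)
    (hpar : ∀ u : V, u ≠ v →
      G.Adj u (parent u) ∧ G.dist v (parent u) + 1 = G.dist v u)
    (S : Set V) (hS : S = {u | a ≤ G.dist v u ∧ G.dist v u ≤ a + h - 1})
    (hS' : (G.induce S).Connected)
    (v' : V) (hv' : v' ∈ S) (w : V) (hw : w ∈ S)
    (ℓ : ℕ) (hℓ : ℓ = (G.induce S).dist ⟨v', hv'⟩ ⟨w, hw⟩) :
    ∀ m : ℕ, m ≤ G.dist v w → ∀ hx : parent^[m] w ∈ S,
      m < h ∧
      ℓ + 1 ≤ (G.induce S).dist ⟨v', hv'⟩ ⟨parent^[m] w, hx⟩ + h ∧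
      (G.induce S).dist ⟨v', hv'⟩ ⟨parent^[m] w, hx⟩ + 1 ≤ ℓ + h := by
  intro m hm hx
  -- distances along the tree path
  have key : ∀ k, k ≤ G.dist v w → G.dist v (parent^[k] w) + k = G.dist v w := by
    intro k
    induction k with
    | zero => simp
    | succ n ih =>
      intro hk
      have ihn := ih (Nat.le_of_succ_le hk)
      have hne : parent^[n] w ≠ v := by
        intro hEq
        rw [hEq, SimpleGraph.dist_self] at ihn
        omega
      have h2 := (hpar _ hne).2
      rw [Function.iterate_succ_apply']
      omega
  have hwS : a ≤ G.dist v w ∧ G.dist v w ≤ a + h - 1 := by rw [hS] at hw; exact hw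
  have hxS : a ≤ G.dist v (parent^[m] w) ∧ G.dist v (parent^[m] w) ≤ a + h - 1 := by
    rw [hS] at hx; exact hx
  have hkey := key m hm
  have hm_lt : m < h := by omega
  have memS : ∀ k, k ≤ m → parent^[k] w ∈ S := by
    intro k hk
    have := key k (le_trans hk hm)
    rw [hS]
    exact ⟨by omega, by omega⟩
  -- consecutive path vertices are adjacent in the induced graph
  have adjstep : ∀ k (hk : k + 1 ≤ m),
      (G.induce S).Adj ⟨parent^[k] w, memS k (by omega)⟩
        ⟨parent^[k+1] w, memS (k+1) hk⟩ := by
    intro k hk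
    have hkd := key k (by omega)
    have hne : parent^[k] w ≠ v := by
      intro hEq
      rw [hEq, SimpleGraph.dist_self] at hkd
      omega
    have hadj := (hpar _ hne).1
    have hrw : parent^[k+1] w = parent (parent^[k] w) := Function.iterate_succ_apply' _ _ _
    simp only [hrw]
    exact hadj
  -- distance in the induced graph from path vertices to w
  have distw : ∀ k (hk : k ≤ m),
      (G.induce S).dist ⟨parent^[k] w, memS k hk⟩ ⟨w, hw⟩ ≤ k := by
    intro k
    induction k with
    | zero =>
      intro hk
      have : (⟨parent^[0] w, memS 0 hk⟩ : {x // x ∈ S}) = ⟨w, hw⟩ := by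
        apply Subtype.ext; simp
      rw [this, SimpleGraph.dist_self]
    | succ n ih =>
      intro hk
      have ihn := ih (Nat.le_of_succ_le hk)
      have htri := hS'.dist_triangle
        (u := ⟨parent^[n+1] w, memS (n+1) hk⟩)
        (v := ⟨parent^[n] w, memS n (Nat.le_of_succ_le hk)⟩)
        (w := ⟨w, hw⟩)
      have h1 : (G.induce S).dist ⟨parent^[n+1] w, memS (n+1) hk⟩
          ⟨parent^[n] w, memS n (Nat.le_of_succ_le hk)⟩ ≤ 1 := by
        have := SimpleGraph.dist_le (SimpleGraph.Walk.cons (adjstep n hk).symm SimpleGraph.Walk.nil)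
        rw [SimpleGraph.Walk.length_cons, SimpleGraph.Walk.length_nil] at this
        exact this
      omega
  have hdwx : (G.induce S).dist ⟨w, hw⟩ ⟨parent^[m] w, hx⟩ ≤ m := by
    rw [SimpleGraph.dist_comm]
    exact distw m le_rfl
  have htri1 := hS'.dist_triangle (u := ⟨v', hv'⟩) (v := ⟨w, hw⟩) (w := ⟨parent^[m] w, hx⟩)
  have htri2 := hS'.dist_triangle (u := ⟨v', hv'⟩) (v := ⟨parent^[m] w, hx⟩) (w := ⟨w, hw⟩)
  have hdxw : (G.induce S).dist ⟨parent^[m] w, hx⟩ ⟨w, hw⟩ ≤ m := distw m le_rfl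
  refine ⟨hm_lt, ?_, ?_⟩ <;> omega
end

section
/- For every q ≥ 1, the 1-subdivision of the complete bipartite graph K_{q²,q} contains every graph on at most q vertices as an induced minor. -/
open SimpleGraph

/-!
Embed `V(H)` into the side `β` by `f` and the ordered pairs of vertices of `H` into the side
`α` by `g` (for `K_{q²,q}` and `m ≤ q` both fit, as `m² ≤ q²`). The branch set of `w` is the
tree formed by `f w`, the subdivision vertices of the edges `g (w, u) — f w` and
`g (u, w) — f w` for the neighbours `u` of `w`, and the vertices `g (w, u)`. An edge `wu` of `H`
is realised by `g (w, u)`, which is adjacent to the subdivision vertex of `g (w, u) — f u` in the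
branch set of `u`; since `f` and `g` are injective, no other adjacency between branch sets
arises.
-/

namespace SimpleGraph

section OneSubdivision

variable {V : Type} (G : SimpleGraph V)

@[simp]
lemma oneSubdivision_adj_inl_inr (v : V) (e : G.edgeSet) :
    (oneSubdivision G).Adj (Sum.inl v) (Sum.inr e) ↔ v ∈ (e : Sym2 V) := by
  simp [oneSubdivision]

@[simp]
lemma oneSubdivision_adj_inr_inl (e : G.edgeSet) (v : V) :
    (oneSubdivision G).Adj (Sum.inr e) (Sum.inl v) ↔ v ∈ (e : Sym2 V) := by
  rw [adj_comm, oneSubdivision_adj_inl_inr]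

@[simp]
lemma not_oneSubdivision_adj_inl_inl (v w : V) :
    ¬ (oneSubdivision G).Adj (Sum.inl v) (Sum.inl w) := by
  simp [oneSubdivision]

@[simp]
lemma not_oneSubdivision_adj_inr_inr (e f : G.edgeSet) :
    ¬ (oneSubdivision G).Adj (Sum.inr e) (Sum.inr f) := by
  simp [oneSubdivision]

end OneSubdivision

section CompleteBipartite

variable {α β : Type}

def completeBipartiteEdge (a : α) (b : β) : (completeBipartiteGraph α β).edgeSet :=
  ⟨s(Sum.inl a, Sum.inr b), by simp⟩

@[simp]
lemma mem_completeBipartiteEdge {a : α} {b : β} {x : α ⊕ β} :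
    x ∈ (completeBipartiteEdge a b : Sym2 (α ⊕ β)) ↔ x = Sum.inl a ∨ x = Sum.inr b := by
  simp [completeBipartiteEdge]

@[simp]
lemma completeBipartiteEdge_inj {a a' : α} {b b' : β} :
    completeBipartiteEdge a b = completeBipartiteEdge a' b' ↔ a = a' ∧ b = b' := by
  simp [completeBipartiteEdge, Subtype.ext_iff]

end CompleteBipartite

end SimpleGraph

section InducedMinor

variable {W α β : Type} (H : SimpleGraph W) (f : W ↪ β) (g : W × W ↪ α)

def subdivisionBranchSet (w : W) : Set ((α ⊕ β) ⊕ (completeBipartiteGraph α β).edgeSet) :=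
  {x | x = Sum.inl (Sum.inr (f w)) ∨ ∃ u, H.Adj w u ∧
    (x = Sum.inl (Sum.inl (g (w, u))) ∨
      x = Sum.inr (completeBipartiteEdge (g (w, u)) (f w)) ∨
      x = Sum.inr (completeBipartiteEdge (g (u, w)) (f w)))}

lemma center_mem_subdivisionBranchSet (w : W) :
    Sum.inl (Sum.inr (f w)) ∈ subdivisionBranchSet H f g w :=
  Or.inl rfl

lemma subdivisionBranchSet_connected (w : W) :
    ((oneSubdivision (completeBipartiteGraph α β)).induce
      (subdivisionBranchSet H f g w)).Connected := by
  let c : subdivisionBranchSet H f g w := ⟨_, center_mem_subdivisionBranchSet H f g w⟩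
  have reach_center : ∀ x, ((oneSubdivision (completeBipartiteGraph α β)).induce
      (subdivisionBranchSet H f g w)).Reachable x c := by
    rintro ⟨x, rfl | ⟨u, hu, rfl | rfl | rfl⟩⟩
    · rfl
    · have hs :
          Sum.inr (completeBipartiteEdge (g (w, u)) (f w)) ∈ subdivisionBranchSet H f g w :=
        Or.inr ⟨u, hu, Or.inr (Or.inl rfl)⟩
      exact (Adj.reachable (v := ⟨_, hs⟩) (by simp)).trans (Adj.reachable (by simp [c]))
    all_goals exact Adj.reachable (by simp [c])
  have : Nonempty (subdivisionBranchSet H f g w) := ⟨c⟩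
  exact ⟨fun x y => (reach_center x).trans (reach_center y).symm⟩

lemma disjoint_subdivisionBranchSet {w w' : W} (hne : w ≠ w') :
    Disjoint (subdivisionBranchSet H f g w) (subdivisionBranchSet H f g w') := by
  rw [Set.disjoint_left]
  rintro x (rfl | ⟨u, hu, rfl | rfl | rfl⟩) (h | ⟨u', hu', h | h | h⟩) <;> simp_all

lemma exists_adj_subdivisionBranchSet_of_adj {w w' : W} (h : H.Adj w w') :
    ∃ x ∈ subdivisionBranchSet H f g w, ∃ y ∈ subdivisionBranchSet H f g w',
      (oneSubdivision (completeBipartiteGraph α β)).Adj x y :=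
  ⟨_, Or.inr ⟨w', h, Or.inl rfl⟩, _, Or.inr ⟨w, h.symm, Or.inr (Or.inr rfl)⟩, by simp⟩

lemma adj_of_adj_inl_inr_subdivisionBranchSet {w w' : W} (hne : w ≠ w') {v : α ⊕ β}
    {e : (completeBipartiteGraph α β).edgeSet} (hv : Sum.inl v ∈ subdivisionBranchSet H f g w)
    (he : Sum.inr e ∈ subdivisionBranchSet H f g w')
    (hve : (oneSubdivision (completeBipartiteGraph α β)).Adj (Sum.inl v) (Sum.inr e)) :
    H.Adj w w' := by
  rcases hv with h | ⟨u, hu, h | h | h⟩ <;> rcases he with h' | ⟨u', hu', h' | h' | h'⟩ <;>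
    simp_all

lemma adj_of_adj_subdivisionBranchSet {w w' : W} (hne : w ≠ w') {x y}
    (hx : x ∈ subdivisionBranchSet H f g w) (hy : y ∈ subdivisionBranchSet H f g w')
    (hxy : (oneSubdivision (completeBipartiteGraph α β)).Adj x y) : H.Adj w w' := by
  rcases x with v | e <;> rcases y with v' | e'
  · simp at hxy
  · exact adj_of_adj_inl_inr_subdivisionBranchSet H f g hne hx hy hxy
  · exact (adj_of_adj_inl_inr_subdivisionBranchSet H f g hne.symm hy hx hxy.symm).symm
  · simp at hxy

end InducedMinor

theorem isInducedMinor_oneSubdivision_completeBipartiteGraph {W α β : Type}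
    (H : SimpleGraph W) (f : W ↪ β) (g : W × W ↪ α) :
    IsInducedMinor H (oneSubdivision (completeBipartiteGraph α β)) :=
  ⟨subdivisionBranchSet H f g, fun w => ⟨_, center_mem_subdivisionBranchSet H f g w⟩,
    subdivisionBranchSet_connected H f g, fun _ _ => disjoint_subdivisionBranchSet H f g,
    fun _ _ hne => ⟨exists_adj_subdivisionBranchSet_of_adj H f g,
      fun ⟨_, hx, _, hy, hxy⟩ => adj_of_adj_subdivisionBranchSet H f g hne hx hy hxy⟩⟩

theorem stmt11_general (q : ℕ) (m : ℕ) (hm : m ≤ q) (H : SimpleGraph (Fin m)) :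
    IsInducedMinor H
      (oneSubdivision (completeBipartiteGraph (Fin (q ^ 2)) (Fin q))) := by
  obtain ⟨g⟩ : Nonempty (Fin m × Fin m ↪ Fin (q ^ 2)) :=
    Function.Embedding.nonempty_of_card_le (by simpa [sq] using Nat.mul_le_mul hm hm)
  exact isInducedMinor_oneSubdivision_completeBipartiteGraph H (Fin.castLEEmb hm) g

/-- the 1-subdivision of `K_{q²,q}` contains every graph on at most `q`
vertices as an induced minor. -/
theorem stmt11 (q : ℕ) (hq : 1 ≤ q) (m : ℕ) (hm : m ≤ q) (H : SimpleGraph (Fin m)) :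
    IsInducedMinor H
      (oneSubdivision (completeBipartiteGraph (Fin (q ^ 2)) (Fin q))) :=
  stmt11_general q m hm H
end

section
/- Every finite simple graph G admits a 3-edge-coloring with clustering at most tpw(G)·(Δ(G)+1), i.e., E(G) can be partitioned into three classes such that every connected component of each class (as a spanning subgraph) has at most tpw(G)·(Δ(G)+1) vertices. -/
open SimpleGraph

noncomputable def edgeColor {V : Type} (f : V → ℕ) : Sym2 V → ℕ :=
  Sym2.lift ⟨fun a b => min (f a) (f b) % 2, fun a b => by dsimp only; rw [min_comm]⟩

@[simp] lemma edgeColor_mk {V : Type} (f : V → ℕ) (a b : V) :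
    edgeColor f s(a, b) = min (f a) (f b) % 2 := Sym2.lift_mk _ _ _

lemma exists_path_length_dist {ι : Type} {T : SimpleGraph ι} (hc : T.Connected) (x r : ι) :
    ∃ p : T.Walk x r, p.IsPath ∧ p.length = T.dist r x := by
  classical
  obtain ⟨w, hw⟩ := (hc x r).exists_walk_length_eq_dist
  refine ⟨w.bypass, w.bypass_isPath, le_antisymm ?_ ?_⟩
  · calc w.bypass.length ≤ w.length := Walk.length_bypass_le w
    _ = T.dist r x := by rw [hw, SimpleGraph.dist_comm]
  · rw [SimpleGraph.dist_comm]; exact dist_le _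

lemma adj_dist_root {ι : Type} {T : SimpleGraph ι} (hc : T.Connected) (ha : T.IsAcyclic)
    (r : ι) {a b : ι} (hab : T.Adj a b) :
    T.dist r b = T.dist r a + 1 ∨ T.dist r a = T.dist r b + 1 := by
  classical
  have hd1 : T.dist a b ≤ 1 := by
    have := dist_le (Walk.cons hab (Walk.nil : T.Walk b b)); simpa using this
  have hd2 : T.dist b a ≤ 1 := by
    have := dist_le (Walk.cons hab.symm (Walk.nil : T.Walk a a)); simpa using this
  have h1 : T.dist r b ≤ T.dist r a + 1 :=
    le_trans (hc.dist_triangle (v := a)) (by omega)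
  have h2 : T.dist r a ≤ T.dist r b + 1 :=
    le_trans (hc.dist_triangle (v := b)) (by omega)
  have hne : T.dist r a ≠ T.dist r b := by
    intro heq
    obtain ⟨p, hp, hpl⟩ := exists_path_length_dist hc a r
    by_cases hmem : b ∈ p.support
    · have hL1 : T.dist b r ≤ (p.dropUntil b hmem).length := dist_le _
      have hL2 : (p.takeUntil b hmem).length + (p.dropUntil b hmem).length = p.length := by
        rw [← Walk.length_append, p.take_spec hmem]
      have hpos : 0 < (p.takeUntil b hmem).length :=
        Nat.pos_of_ne_zero (fun h0 => hab.ne (Walk.eq_of_length_eq_zero h0))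
      have hcomm : T.dist b r = T.dist r b := SimpleGraph.dist_comm
      omega
    · have hp' : (Walk.cons hab.symm p).IsPath := (Walk.cons_isPath_iff _ _).2 ⟨hp, hmem⟩
      obtain ⟨q, hq, hql⟩ := exists_path_length_dist hc b r
      have hpath := ha.path_unique ⟨Walk.cons hab.symm p, hp'⟩ ⟨q, hq⟩
      have hlen : (Walk.cons hab.symm p).length = q.length :=
        congrArg (fun P : T.Path b r => P.1.length) hpath
      rw [Walk.length_cons] at hlen
      omega
  omega

lemma unique_parent {ι : Type} {T : SimpleGraph ι} (hc : T.Connected) (ha : T.IsAcyclic)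
    (r : ι) {y a b : ι} (hya : T.Adj y a) (hyb : T.Adj y b)
    (hda : T.dist r a + 1 = T.dist r y) (hdb : T.dist r b + 1 = T.dist r y) : a = b := by
  classical
  obtain ⟨p, hp, hpl⟩ := exists_path_length_dist hc a r
  obtain ⟨q, hq, hql⟩ := exists_path_length_dist hc b r
  have hyp : y ∉ p.support := by
    intro hmem
    have hL1 : T.dist y r ≤ (p.dropUntil y hmem).length := dist_le _
    have hL2 : (p.takeUntil y hmem).length + (p.dropUntil y hmem).length = p.length := by
      rw [← Walk.length_append, p.take_spec hmem]
    have hcomm : T.dist y r = T.dist r y := SimpleGraph.dist_comm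
    omega
  have hyq : y ∉ q.support := by
    intro hmem
    have hL1 : T.dist y r ≤ (q.dropUntil y hmem).length := dist_le _
    have hL2 : (q.takeUntil y hmem).length + (q.dropUntil y hmem).length = q.length := by
      rw [← Walk.length_append, q.take_spec hmem]
    have hcomm : T.dist y r = T.dist r y := SimpleGraph.dist_comm
    omega
  have hP1 : (Walk.cons hya p).IsPath := (Walk.cons_isPath_iff _ _).2 ⟨hp, hyp⟩
  have hP2 : (Walk.cons hyb q).IsPath := (Walk.cons_isPath_iff _ _).2 ⟨hq, hyq⟩
  have hpath := ha.path_unique ⟨Walk.cons hya p, hP1⟩ ⟨Walk.cons hyb q, hP2⟩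
  have hsup := congrArg (fun P : T.Path y r => P.1.support) hpath
  simp only [Walk.support_cons, List.cons.injEq] at hsup
  have h1 := p.support_eq_cons
  have h2 := q.support_eq_cons
  rw [h1, h2] at hsup
  exact (List.cons_eq_cons.mp hsup.2).1

/-- every graph admits a 3-edge-coloring with clustering
`tpw(G)·(Δ(G)+1)`. -/
theorem stmt12 {V : Type} [Fintype V] (G : SimpleGraph V) :
    ∃ F : Fin 3 → Set (Sym2 V), IsEdgePartition G F ∧
      ∀ i, HasClusteredComponents (F i) (tpw G * (maxDeg G + 1)) := by
  classical
  have htriv : HasTpwAtMost G (Fintype.card V) := by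
    refine ⟨Unit, ⊥, fun _ => Set.univ, ?_, ?_, ?_, ?_, ?_⟩
    · rw [connected_iff]
      exact ⟨fun a b => Subsingleton.elim a b ▸ Reachable.refl a, ⟨()⟩⟩
    · rintro v (_ | ⟨h, _⟩) hc
      · exact hc.ne_nil rfl
      · exact h.elim
    · exact fun v => ⟨(), trivial, fun _ _ => rfl⟩
    · exact fun u v _ => ⟨(), (), Or.inl rfl, trivial, trivial⟩
    · intro x
      rw [Set.ncard_univ, Nat.card_eq_fintype_card]
  obtain ⟨ι, T, B, hTc, hTa, huniq, hedge, hsize⟩ :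
      HasTpwAtMost G (tpw G) := Nat.sInf_mem (s := {w | HasTpwAtMost G w}) ⟨_, htriv⟩
  obtain ⟨r⟩ := hTc.nonempty
  set bag : V → ι := fun v => (huniq v).choose with hbagdef
  have hbag : ∀ v, v ∈ B (bag v) := fun v => (huniq v).choose_spec.1
  have bag_eq : ∀ {v : V} {x : ι}, v ∈ B x → x = bag v :=
    fun {v x} h => (huniq v).choose_spec.2 x h
  set f : V → ℕ := fun v => T.dist r (bag v) with hfdef
  have hf : ∀ u, f u = T.dist r (bag u) := fun u => by rw [hfdef]
  have hadj : ∀ u v : V, G.Adj u v → bag u = bag v ∨ T.Adj (bag u) (bag v) := by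
    intro u v h
    obtain ⟨x, y, hxy, hu, hv⟩ := hedge u v h
    rw [← bag_eq hu, ← bag_eq hv]
    exact hxy
  have hdeg : ∀ z : V, (G.neighborSet z).ncard ≤ maxDeg G := by
    intro z
    have hbdd : BddAbove {d | ∃ v : V, (G.neighborSet v).ncard = d} := by
      refine ⟨Fintype.card V, ?_⟩
      rintro d ⟨v, rfl⟩
      calc (G.neighborSet v).ncard ≤ (Set.univ : Set V).ncard :=
            Set.ncard_le_ncard (Set.subset_univ _) Set.finite_univ
        _ = Fintype.card V := by rw [Set.ncard_univ, Nat.card_eq_fintype_card]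
    exact le_csSup hbdd ⟨z, rfl⟩
  refine ⟨fun i => {e | e ∈ G.edgeSet ∧ edgeColor f e = (i : ℕ)}, ⟨?_, ?_⟩, ?_⟩
  · exact fun i e he => he.1
  · intro e he
    have hlt : edgeColor f e < 3 := by
      induction e using Sym2.ind with
      | _ a b =>
        rw [edgeColor_mk]
        exact Nat.lt_of_lt_of_le (Nat.mod_lt _ (by norm_num)) (by norm_num)
    refine ⟨⟨edgeColor f e, hlt⟩, ⟨he, rfl⟩, ?_⟩
    rintro j ⟨-, hj⟩
    exact Fin.ext hj.symm
  · -- clustered components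
    rintro i v ⟨e, ⟨heE, heC⟩, hve⟩
    set w : V := Sym2.Mem.other hve with hwdef
    have hew : s(v, w) = e := Sym2.other_spec hve
    have hvw : G.Adj v w := by rw [← mem_edgeSet, hew]; exact heE
    have hcol : min (f v) (f w) % 2 = (i : ℕ) := by
      rw [← heC, ← hew, edgeColor_mk]
    have main : ∀ x : ι, T.dist r x % 2 = (i : ℕ) →
        (bag v = x ∨ ∃ z, z ∈ B x ∧ G.Adj z v ∧ f v = T.dist r x + 1) →
        {u | (fromEdgeSet {e | e ∈ G.edgeSet ∧ edgeColor f e = (i : ℕ)}).Reachable v u}.ncard ≤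
          tpw G * (maxDeg G + 1) := by
      intro x hx hPv
      set P : V → Prop :=
        fun u => bag u = x ∨ ∃ z, z ∈ B x ∧ G.Adj z u ∧ f u = T.dist r x + 1 with hPdef
      have step : ∀ a b : V, P a →
          (fromEdgeSet {e | e ∈ G.edgeSet ∧ edgeColor f e = (i : ℕ)}).Adj a b → P b := by
        intro a b hPa hab
        rw [fromEdgeSet_adj] at hab
        obtain ⟨⟨habE, habC⟩, -⟩ := hab
        have hG : G.Adj a b := (G.mem_edgeSet).mp habE
        rw [edgeColor_mk] at habC
        rcases hadj a b hG with hsame | hTadj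
        · rcases hPa with h | ⟨z, hz, hza, hfa⟩
          · exact Or.inl (hsame ▸ h)
          · exfalso
            have hfb : f b = f a := by rw [hf, hf, hsame]
            omega
        · have hd := adj_dist_root hTc hTa r hTadj
          rw [← hf, ← hf] at hd
          rcases hPa with h | ⟨z, hz, hza, hfa⟩
          · have hfa : f a = T.dist r x := by rw [hf, h]
            rcases hd with h1 | h1
            · exact Or.inr ⟨a, h ▸ hbag a, hG, by omega⟩
            · exfalso; omega
          · rcases hd with h1 | h1
            · exfalso; omega
            · have hzx : x = bag z := bag_eq hz
              have hzb : bag z ≠ bag a := by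
                intro hzz
                have he1 : f z = f a := by rw [hf, hf, hzz]
                have he2 : f z = T.dist r x := by rw [hf, ← hzx]
                omega
              have hTza : T.Adj (bag z) (bag a) := (hadj z a hza).resolve_left hzb
              have hTxa : T.Adj (bag a) x := by
                rw [hzx]; exact hTza.symm
              have hda : T.dist r (bag b) + 1 = T.dist r (bag a) := by
                rw [← hf, ← hf]; omega
              have hdb : T.dist r x + 1 = T.dist r (bag a) := by
                rw [← hf]; omega
              exact Or.inl (unique_parent hTc hTa r hTadj hTxa hda hdb)
      have key : ∀ u,
          (fromEdgeSet {e | e ∈ G.edgeSet ∧ edgeColor f e = (i : ℕ)}).Reachable v u → P u := by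
        have walkP : ∀ (a b : V)
            (p : (fromEdgeSet {e | e ∈ G.edgeSet ∧ edgeColor f e = (i : ℕ)}).Walk a b),
            P a → P b := by
          intro a b p
          induction p with
          | nil => exact id
          | cons h q ih => exact fun hPa => ih (step _ _ hPa h)
        intro u hu
        exact walkP v u hu.some hPv
      have hsub : {u | (fromEdgeSet {e | e ∈ G.edgeSet ∧ edgeColor f e = (i : ℕ)}).Reachable v u}
          ⊆ B x ∪ ⋃ z ∈ B x, G.neighborSet z := by
        intro u hu
        rcases key u hu with h | ⟨z, hz, hzu, -⟩
        · exact Or.inl (h ▸ hbag u)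
        · exact Or.inr (Set.mem_biUnion hz hzu)
      have hU : (⋃ z ∈ B x, G.neighborSet z).ncard ≤ tpw G * maxDeg G := by
        have hfin : (B x).Finite := Set.toFinite _
        have hUeq : (⋃ z ∈ B x, G.neighborSet z) =
            ↑(hfin.toFinset.biUnion fun z => (Set.toFinite (G.neighborSet z)).toFinset) := by
          ext u
          simp [Set.Finite.mem_toFinset]
        rw [hUeq, Set.ncard_coe_finset]
        calc (hfin.toFinset.biUnion fun z => (Set.toFinite (G.neighborSet z)).toFinset).card
            ≤ ∑ z ∈ hfin.toFinset, ((Set.toFinite (G.neighborSet z)).toFinset).card :=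
              Finset.card_biUnion_le
          _ ≤ ∑ z ∈ hfin.toFinset, maxDeg G := Finset.sum_le_sum (fun z _ => by
              rw [← Set.ncard_eq_toFinset_card]; exact hdeg z)
          _ = hfin.toFinset.card * maxDeg G := by rw [Finset.sum_const, smul_eq_mul]
          _ ≤ tpw G * maxDeg G := Nat.mul_le_mul_right _ (by
              rw [← Set.ncard_eq_toFinset_card]; exact hsize x)
      calc {u | (fromEdgeSet {e | e ∈ G.edgeSet ∧ edgeColor f e = (i : ℕ)}).Reachable v u}.ncard
          ≤ (B x ∪ ⋃ z ∈ B x, G.neighborSet z).ncard :=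
            Set.ncard_le_ncard hsub (Set.toFinite _)
        _ ≤ (B x).ncard + (⋃ z ∈ B x, G.neighborSet z).ncard := Set.ncard_union_le _ _
        _ ≤ tpw G + tpw G * maxDeg G := Nat.add_le_add (hsize x) hU
        _ = tpw G * (maxDeg G + 1) := by ring
    by_cases hle : f v ≤ f w
    · refine main (bag v) ?_ (Or.inl rfl)
      rw [← hf]
      have hmin : min (f v) (f w) = f v := min_eq_left hle
      omega
    · push_neg at hle
      have hne : bag v ≠ bag w := by
        intro hh
        have : f v = f w := by rw [hf, hf, hh]
        omega
      have hTvw : T.Adj (bag v) (bag w) := (hadj v w hvw).resolve_left hne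
      have hd := adj_dist_root hTc hTa r hTvw
      rw [← hf, ← hf] at hd
      have hfv : f v = f w + 1 := by rcases hd with h | h <;> omega
      refine main (bag w) ?_ (Or.inr ⟨w, hbag w, hvw.symm, by rw [← hf]; omega⟩)
      rw [← hf]
      have hmin : min (f v) (f w) = f w := min_eq_right (le_of_lt hle)
      omega
end

section
/- Let H be a graph of treewidth at most t and P a path. Then E(H ⊠ P) can be partitioned into three classes F₀, F₁, F₂ such that each spanning subgraph (V(H ⊠ P), F_i) has treewidth at most 2t + 1. Specifically, coloring edges within a single copy of H (same path-coordinate) with color 2, and edges between consecutive path-coordinates v_i, v_{i+1} with color i mod 2, works: the color-2 subgraph is a disjoint union of copies of H, and each of the color-0 and color-1 subgraphs is a disjoint union of copies of H ⊠ K₂. -/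
open SimpleGraph

lemma glue {V κ : Type} (G : SimpleGraph V) (c : V → κ) (w : ℕ)
    (hresp : ∀ u v, G.Adj u v → c u = c v)
    (hfib : ∀ k : κ, ∃ (ι : Type) (T : SimpleGraph ι) (B : ι → Set V),
      T.Connected ∧ T.IsAcyclic ∧
      (∀ i, B i ⊆ {v | c v = k}) ∧
      (∀ v, c v = k → ∃ i, v ∈ B i) ∧
      (∀ u v, G.Adj u v → c u = k → ∃ i, u ∈ B i ∧ v ∈ B i) ∧
      (∀ v, c v = k → (T.induce {i | v ∈ B i}).Connected) ∧
      (∀ i, (B i).ncard ≤ w + 1)) :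
    HasTreewidthAtMost G w := by
  classical
  choose ι T B hconn hacyc hsub hcov hedge htrace hcard using hfib
  have hnem : ∀ k, Nonempty (ι k) := fun k => (hconn k).nonempty
  let r : ∀ k, ι k := fun k => (hnem k).some
  let f : ∀ k, ι k → Option (Σ k, ι k) := fun k i => some ⟨k, i⟩
  let T' : SimpleGraph (Option (Σ k, ι k)) := SimpleGraph.fromRel (fun a b =>
    (∃ k, a = some ⟨k, r k⟩ ∧ b = none) ∨
    (∃ (k : κ) (i j : ι k), (T k).Adj i j ∧ a = some ⟨k, i⟩ ∧ b = some ⟨k, j⟩))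
  have hAdjSome : ∀ (k : κ) (i j : ι k), (T k).Adj i j →
      T'.Adj (some ⟨k, i⟩) (some ⟨k, j⟩) := by
    intro k i j h
    rw [SimpleGraph.fromRel_adj]
    refine ⟨fun he => ?_, Or.inl (Or.inr ⟨k, i, j, h, rfl, rfl⟩)⟩
    injection he with he
    injection he with hk hi
    exact h.ne hi
  have hAdjNone : ∀ b, T'.Adj none b → ∃ k, b = some ⟨k, r k⟩ := by
    intro b h
    rw [SimpleGraph.fromRel_adj] at h
    obtain ⟨hne, (⟨k, h1, h2⟩ | ⟨k, i, j, _, h1, h2⟩) | (⟨k, h1, h2⟩ | ⟨k, i, j, _, h1, h2⟩)⟩ := h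
    · exact absurd h1 (by simp)
    · exact absurd h1 (by simp)
    · exact ⟨k, h1⟩
    · exact absurd h2 (by simp)
  have unpack : ∀ (k : κ) (i : ι k) (x : Option (Σ k, ι k)),
      T'.Adj (some ⟨k, i⟩) x → x ≠ none →
      ∃ j : ι k, x = some ⟨k, j⟩ ∧ (T k).Adj i j := by
    intro k i x h hx
    rw [SimpleGraph.fromRel_adj] at h
    obtain ⟨hne, (⟨k', h1, h2⟩ | ⟨k', i', j', hadj, h1, h2⟩) | (⟨k', h1, h2⟩ | ⟨k', i', j', hadj, h1, h2⟩)⟩ := h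
    · exact absurd h2 hx
    · injection h1 with h1
      injection h1 with hk hi
      subst hk
      rw [heq_eq_eq] at hi
      subst hi
      exact ⟨j', h2, hadj⟩
    · exact absurd h2 (by simp)
    · injection h2 with h2
      injection h2 with hk hi
      subst hk
      rw [heq_eq_eq] at hi
      subst hi
      exact ⟨i', h1, hadj.symm⟩
  have pull : ∀ (k : κ) (a b : Option (Σ k, ι k)) (p : T'.Walk a b),
      none ∉ p.support → ∀ (i : ι k), a = some ⟨k, i⟩ →
      ∃ (j : ι k) (q : (T k).Walk i j), b = some ⟨k, j⟩ ∧
        p.support = q.support.map (f k) ∧ p.edges = q.edges.map (Sym2.map (f k)) := by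
    intro k a b p
    induction p with
    | nil =>
      intro _ i ha
      subst ha
      exact ⟨i, SimpleGraph.Walk.nil, rfl, by simp [f], by simp⟩
    | @cons u x b h p ih =>
      intro hn i ha
      subst ha
      have hx : x ≠ none := by
        intro hx
        exact hn (by rw [SimpleGraph.Walk.support_cons]; exact List.mem_cons_of_mem _ (hx ▸ p.start_mem_support))
      obtain ⟨j', hx', hadj⟩ := unpack k i x h hx
      subst hx'
      have hn' : none ∉ p.support := fun hmem =>
        hn (by rw [SimpleGraph.Walk.support_cons]; exact List.mem_cons_of_mem _ hmem)
      obtain ⟨j, q, hb, hsup, hedg⟩ := ih hn' j' rfl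
      refine ⟨j, SimpleGraph.Walk.cons hadj q, hb, ?_, ?_⟩
      · rw [SimpleGraph.Walk.support_cons, SimpleGraph.Walk.support_cons, hsup, List.map_cons]
      · rw [SimpleGraph.Walk.edges_cons, SimpleGraph.Walk.edges_cons, hedg, List.map_cons,
          Sym2.map_pair_eq]
  have hnonecyc : ∀ (p : T'.Walk none none), ¬ p.IsCycle := by
    intro p hp
    cases p with
    | nil => exact hp.ne_nil rfl
    | @cons _ x _ h q =>
      obtain ⟨k, rfl⟩ := hAdjNone x h
      have h3 : 3 ≤ (SimpleGraph.Walk.cons h q).length := hp.three_le_length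
      obtain ⟨cn, h₂, q₂, hrev⟩ :=
        SimpleGraph.Walk.exists_eq_cons_of_ne (by simp) q.reverse
      obtain ⟨k₂, rfl⟩ := hAdjNone cn h₂
      have hnodup : q.support.Nodup := by
        have := hp.support_nodup
        rwa [SimpleGraph.Walk.support_cons, List.tail_cons] at this
      have h5 : q.support.reverse = none :: q₂.support := by
        rw [← SimpleGraph.Walk.support_reverse, hrev, SimpleGraph.Walk.support_cons]
      have hnodup' : (none :: q₂.support).Nodup := by
        rw [← h5]; exact List.nodup_reverse.mpr hnodup
      have hnn : none ∉ q₂.support := (List.nodup_cons.mp hnodup').1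
      obtain ⟨j, q₃, hend, _, _⟩ := pull k₂ _ _ q₂ hnn (r k₂) rfl
      injection hend with hend
      injection hend with hk hend
      subst hk
      rw [heq_eq_eq] at hend
      subst hend
      -- q₂ : T'.Walk (some ⟨k, r k⟩) (some ⟨k, r k⟩) with nodup support
      have hq₂nil : q₂.length = 0 := by
        cases q₂ with
        | nil => rfl
        | cons h₄ q₄ =>
          exfalso
          have hmem := q₄.end_mem_support
          have := (List.nodup_cons.mp hnodup').2
          rw [SimpleGraph.Walk.support_cons] at this
          exact (List.nodup_cons.mp this).1 hmem
      have hlen : q.length = 1 := by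
        have := q.length_reverse
        rw [hrev] at this
        simp [hq₂nil] at this
        omega
      rw [SimpleGraph.Walk.length_cons, hlen] at h3
      omega
  have hT'acyc : T'.IsAcyclic := by
    intro v p hp
    by_cases hn : none ∈ p.support
    · exact hnonecyc (p.rotate none hn) (hp.rotate hn)
    · have hv : v ≠ none := fun h => hn (h ▸ p.start_mem_support)
      obtain ⟨⟨k, i⟩, rfl⟩ := Option.ne_none_iff_exists'.mp hv
      obtain ⟨j, q, hend, hsup, hedg⟩ := pull k _ _ p hn i rfl
      injection hend with hend
      injection hend with hk hend
      subst hend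
      refine hacyc k q ?_
      rw [SimpleGraph.Walk.isCycle_def, SimpleGraph.Walk.isTrail_def]
      refine ⟨List.Nodup.of_map _ (hedg ▸ hp.edges_nodup), ?_, ?_⟩
      · intro hq
        have h3 := hp.three_le_length
        have hlen : p.length = q.length := by
          rw [← SimpleGraph.Walk.length_edges, ← SimpleGraph.Walk.length_edges, hedg,
            List.length_map]
        rw [hq, SimpleGraph.Walk.length_nil] at hlen
        omega
      · have hnd := hp.support_nodup
        rw [hsup] at hnd
        have htl : (List.map (f k) q.support).tail = List.map (f k) q.support.tail := by
          cases q.support <;> simp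
        rw [htl] at hnd
        exact List.Nodup.of_map _ hnd
  have hreach : ∀ x, T'.Reachable x none := by
    intro x
    match x with
    | none => exact SimpleGraph.Reachable.refl _
    | some ⟨k, i⟩ =>
      let hhom : T k →g T' := ⟨f k, fun h => hAdjSome k _ _ h⟩
      have h1 : T'.Reachable (some ⟨k, i⟩) (some ⟨k, r k⟩) :=
        SimpleGraph.Reachable.map hhom ((hconn k).preconnected i (r k))
      have h2 : T'.Adj (some ⟨k, r k⟩) none := by
        rw [SimpleGraph.fromRel_adj]
        exact ⟨by simp, Or.inl (Or.inl ⟨k, rfl, rfl⟩)⟩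
      exact h1.trans h2.reachable
  have hT'conn : T'.Connected := by
    rw [SimpleGraph.connected_iff]
    exact ⟨fun a b => (hreach a).trans (hreach b).symm, ⟨none⟩⟩
  let B' : Option (Σ k, ι k) → Set V := fun x =>
    match x with
    | none => ∅
    | some s => B s.1 s.2
  refine ⟨Option (Σ k, ι k), T', B', hT'conn, hT'acyc, ?_, ?_, ?_, ?_⟩
  · intro v
    obtain ⟨i, hi⟩ := hcov (c v) v rfl
    exact ⟨some ⟨c v, i⟩, hi⟩
  · intro u v hadj
    obtain ⟨i, hi⟩ := hedge (c u) u v hadj rfl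
    exact ⟨some ⟨c u, i⟩, hi⟩
  · intro v
    have hS : ∀ x, v ∈ B' x → ∃ i : ι (c v), x = some ⟨c v, i⟩ ∧ v ∈ B (c v) i := by
      intro x hx
      match x with
      | none => exact absurd hx (by simp [B'])
      | some ⟨k, i⟩ =>
        have hk : c v = k := hsub k i hx
        subst hk
        exact ⟨i, rfl, hx⟩
    let hg : (T (c v)).induce {i | v ∈ B (c v) i} →g T'.induce {x | v ∈ B' x} :=
      ⟨fun a => ⟨some ⟨c v, a.1⟩, a.2⟩, fun hab => hAdjSome (c v) _ _ hab⟩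
    rw [SimpleGraph.connected_iff]
    constructor
    · rintro ⟨x, hx⟩ ⟨y, hy⟩
      obtain ⟨i, rfl, hvi⟩ := hS x hx
      obtain ⟨j, rfl, hvj⟩ := hS y hy
      exact SimpleGraph.Reachable.map hg ((htrace (c v) v rfl).preconnected ⟨i, hvi⟩ ⟨j, hvj⟩)
    · obtain ⟨i, hi⟩ := hcov (c v) v rfl
      exact ⟨⟨some ⟨c v, i⟩, hi⟩⟩
  · intro x
    match x with
    | none => simp [B']
    | some ⟨k, i⟩ => exact hcard k i

lemma classdec {V : Type} [Fintype V] {H : SimpleGraph V} {t m : ℕ}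
    (hH : HasTreewidthAtMost H t)
    (G : SimpleGraph (V × Fin m)) (cL : Fin m → ℕ) (P : Fin m → Prop)
    (hG : ∀ x y : V × Fin m, G.Adj x y → (x.1 = y.1 ∨ H.Adj x.1 y.1) ∧ cL x.2 = cL y.2)
    (hsmall : ∀ a b : Fin m, cL a = cL b → (P a ↔ P b) → a = b) :
    HasTreewidthAtMost G (2 * t + 1) := by
  classical
  obtain ⟨ι, T, B, hconn, hacyc, hcov, hedge, htrace, hcard⟩ := hH
  apply glue G (fun x => cL x.2)
  · intro u v h; exact (hG u v h).2
  · intro k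
    refine ⟨ι, T, fun i => {x | x.1 ∈ B i ∧ cL x.2 = k}, hconn, hacyc, ?_, ?_, ?_, ?_, ?_⟩
    · intro i x hx; exact hx.2
    · intro x hx; obtain ⟨i, hi⟩ := hcov x.1; exact ⟨i, hi, hx⟩
    · intro x y hadj hx
      have h2 := (hG x y hadj).2
      rcases (hG x y hadj).1 with he | hA
      · obtain ⟨i, hi⟩ := hcov x.1
        exact ⟨i, ⟨hi, hx⟩, ⟨he ▸ hi, by rw [← h2]; exact hx⟩⟩
      · obtain ⟨i, hi1, hi2⟩ := hedge x.1 y.1 hA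
        exact ⟨i, ⟨hi1, hx⟩, ⟨hi2, by rw [← h2]; exact hx⟩⟩
    · intro x hx
      have hset : {i | x ∈ {y : V × Fin m | y.1 ∈ B i ∧ cL y.2 = k}} = {i | x.1 ∈ B i} := by
        ext i
        simp only [Set.mem_setOf_eq, hx, and_true]
      rw [hset]
      exact htrace x.1
    · intro i
      have hsplit : {x : V × Fin m | x.1 ∈ B i ∧ cL x.2 = k} =
          {x : V × Fin m | (x.1 ∈ B i ∧ cL x.2 = k) ∧ P x.2} ∪
          {x : V × Fin m | (x.1 ∈ B i ∧ cL x.2 = k) ∧ ¬ P x.2} := by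
        ext x
        by_cases hp : P x.2 <;> simp [hp]
      have hpiece : ∀ (Q : Fin m → Prop), (∀ a b : Fin m, Q a → Q b → (P a ↔ P b)) →
          {x : V × Fin m | (x.1 ∈ B i ∧ cL x.2 = k) ∧ Q x.2}.ncard ≤ (B i).ncard := by
        intro Q hQ
        apply Set.ncard_le_ncard_of_injOn Prod.fst
        · intro x hx; exact hx.1.1
        · intro x hx y hy hxy
          have : x.2 = y.2 :=
            hsmall x.2 y.2 (by rw [hx.1.2, hy.1.2]) (hQ x.2 y.2 hx.2 hy.2)
          exact Prod.ext hxy this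
      calc {x : V × Fin m | x.1 ∈ B i ∧ cL x.2 = k}.ncard
          ≤ {x : V × Fin m | (x.1 ∈ B i ∧ cL x.2 = k) ∧ P x.2}.ncard +
            {x : V × Fin m | (x.1 ∈ B i ∧ cL x.2 = k) ∧ ¬ P x.2}.ncard := by
            rw [hsplit]; exact Set.ncard_union_le _ _
        _ ≤ (B i).ncard + (B i).ncard :=
            Nat.add_le_add (hpiece P (fun a b ha hb => iff_of_true ha hb))
              (hpiece (fun a => ¬ P a) (fun a b ha hb => iff_of_false ha hb))
        _ ≤ 2 * t + 1 + 1 := by have := hcard i; omega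

lemma hasTw_mono {V : Type} {G : SimpleGraph V} {w w' : ℕ} (h : HasTreewidthAtMost G w)
    (hw : w ≤ w') : HasTreewidthAtMost G w' := by
  obtain ⟨ι, T, B, h1, h2, h3, h4, h5, h6⟩ := h
  exact ⟨ι, T, B, h1, h2, h3, h4, h5, fun i => le_trans (h6 i) (by omega)⟩

lemma hasTw_card {V : Type} [Fintype V] (G : SimpleGraph V) :
    HasTreewidthAtMost G (Fintype.card V) := by
  refine ⟨PUnit, ⊥, fun _ => Set.univ, ?_, ?_, fun v => ⟨PUnit.unit, trivial⟩,
    fun u v _ => ⟨PUnit.unit, trivial, trivial⟩, ?_, ?_⟩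
  · rw [SimpleGraph.connected_iff]
    exact ⟨fun a b => by rw [Subsingleton.elim a b], ⟨PUnit.unit⟩⟩
  · intro v p hp
    cases p with
    | nil => exact hp.ne_nil rfl
    | cons h _ => exact h.elim
  · intro v
    rw [SimpleGraph.connected_iff]
    exact ⟨fun a b => by rw [Subsingleton.elim a b], ⟨⟨PUnit.unit, trivial⟩⟩⟩
  · intro _
    rw [Set.ncard_univ, Nat.card_eq_fintype_card]
    omega

/-- for `H` of treewidth at most `t` and `P` a path, the edges of `H ⊠ P`
can be partitioned into three classes each of treewidth at most `2t+1`. -/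
theorem stmt15 {V : Type} [Fintype V] (H : SimpleGraph V) (t m : ℕ)
    (ht : treewidth H ≤ t) :
    ∃ F : Fin 3 → Set (Sym2 (V × Fin m)),
      IsEdgePartition (strongProd H (SimpleGraph.pathGraph m)) F ∧
      ∀ i, treewidth (SimpleGraph.fromEdgeSet (F i)) ≤ 2 * t + 1 := by
  classical
  have hHt : HasTreewidthAtMost H t := by
    have hne : {w | HasTreewidthAtMost H w}.Nonempty := ⟨Fintype.card V, hasTw_card H⟩
    exact hasTw_mono (Nat.sInf_mem hne) ht
  set G := strongProd H (SimpleGraph.pathGraph m) with hGdef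
  have hGadj : ∀ x y : V × Fin m, G.Adj x y →
      (x.1 = y.1 ∨ H.Adj x.1 y.1) ∧
      (x.2 = y.2 ∨ (x.2.val + 1 = y.2.val ∨ y.2.val + 1 = x.2.val)) := by
    intro x y h
    rw [hGdef, strongProd, SimpleGraph.fromRel_adj] at h
    obtain ⟨hne, h | h⟩ := h
    · exact ⟨h.1, h.2.imp id (fun hp => (SimpleGraph.pathGraph_adj.mp hp).imp id id)⟩
    · refine ⟨h.1.imp Eq.symm SimpleGraph.Adj.symm, ?_⟩
      refine (h.2.imp Eq.symm (fun hp => ?_))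
      exact ((SimpleGraph.pathGraph_adj.mp hp).imp id id).symm
  let col : Sym2 (V × Fin m) → Fin 3 := Sym2.lift ⟨fun x y =>
    if x.2 = y.2 then 2 else ⟨min x.2.val y.2.val % 2, by omega⟩, by
      intro x y
      dsimp only
      by_cases h : x.2 = y.2
      · rw [if_pos h, if_pos h.symm]
      · rw [if_neg h, if_neg (Ne.symm h)]
        congr 1
        rw [Nat.min_comm]⟩
  have hcol_mk : ∀ x y : V × Fin m, col s(x, y) =
      if x.2 = y.2 then 2 else ⟨min x.2.val y.2.val % 2, by omega⟩ := fun x y => rfl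
  refine ⟨fun i => {e | e ∈ G.edgeSet ∧ col e = i}, ⟨fun i e he => he.1, ?_⟩, ?_⟩
  · intro e he
    exact ⟨col e, ⟨he, rfl⟩, fun j hj => hj.2.symm⟩
  · intro i
    apply Nat.sInf_le
    show HasTreewidthAtMost _ _
    have hFadj : ∀ x y : V × Fin m,
        (SimpleGraph.fromEdgeSet {e | e ∈ G.edgeSet ∧ col e = i}).Adj x y →
        G.Adj x y ∧ (if x.2 = y.2 then (2 : Fin 3) else ⟨min x.2.val y.2.val % 2, by omega⟩) = i := by
      intro x y h
      rw [SimpleGraph.fromEdgeSet_adj] at h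
      obtain ⟨⟨hmem, hcol⟩, hne⟩ := h
      exact ⟨(SimpleGraph.mem_edgeSet _).mp hmem, (hcol_mk x y) ▸ hcol⟩
    fin_cases i
    · -- class 0 : edges between layers 2a, 2a+1
      apply classdec hHt _ (fun l => (l.val + 0) / 2) (fun l => (l.val + 0) % 2 = 0)
      · intro x y hadj
        obtain ⟨hG1, hcol⟩ := hFadj x y hadj
        obtain ⟨hf, hs⟩ := hGadj x y hG1
        refine ⟨hf, ?_⟩
        have hx2 : x.2 ≠ y.2 := by
          intro he
          rw [if_pos he] at hcol
          exact absurd (congrArg Fin.val hcol) (by simp)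
        rw [if_neg hx2] at hcol
        have hmin : min x.2.val y.2.val % 2 = 0 := congrArg Fin.val hcol
        rcases hs with he | hp
        · exact absurd he hx2
        · omega
      · intro a b h1 h2
        apply Fin.ext
        omega
    · -- class 1
      apply classdec hHt _ (fun l => (l.val + 1) / 2) (fun l => (l.val + 1) % 2 = 0)
      · intro x y hadj
        obtain ⟨hG1, hcol⟩ := hFadj x y hadj
        obtain ⟨hf, hs⟩ := hGadj x y hG1
        refine ⟨hf, ?_⟩
        have hx2 : x.2 ≠ y.2 := by
          intro he
          rw [if_pos he] at hcol
          exact absurd (congrArg Fin.val hcol) (by simp)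
        rw [if_neg hx2] at hcol
        have hmin : min x.2.val y.2.val % 2 = 1 := congrArg Fin.val hcol
        rcases hs with he | hp
        · exact absurd he hx2
        · omega
      · intro a b h1 h2
        apply Fin.ext
        omega
    · -- class 2 : horizontal edges
      apply classdec hHt _ (fun l => l.val) (fun _ => True)
      · intro x y hadj
        obtain ⟨hG1, hcol⟩ := hFadj x y hadj
        obtain ⟨hf, hs⟩ := hGadj x y hG1
        refine ⟨hf, ?_⟩
        by_cases he : x.2 = y.2
        · rw [he]
        · rw [if_neg he] at hcol
          have := congrArg Fin.val hcol
          simp at this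
          omega
      · intro a b h1 _
        exact Fin.ext h1
end

section
/- The Pohoata–Davies n×n grid G_n is a subgraph of the strong product S ⊠ P of a star S with n leaves and a path P on n+1 vertices. In particular, G_n is a subgraph of H ⊠ P for a graph H of treewidth 1. -/
open SimpleGraph

lemma star_acyclic' {V : Type} {G : SimpleGraph V} {c : V}
    (hc : ∀ u v : V, G.Adj u v → u = c ∨ v = c) : G.IsAcyclic := by
  classical
  have key : ∀ q : G.Walk c c, ¬ q.IsCycle := by
    intro q hq
    have h3 := hq.three_le_length
    cases q with
    | nil => simp at h3
    | cons h1 r =>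
      rename_i w
      cases r with
      | nil => simp at h3
      | cons h2 s =>
        rename_i x
        have hw : w ≠ c := fun e => G.irrefl (e ▸ h1)
        have hx : x = c := ((hc _ _ h2).resolve_left hw)
        cases s with
        | nil => simp [Walk.length_cons] at h3
        | cons h3' t =>
          have hnd := hq.support_nodup
          have hcend : c ∈ t.support := t.end_mem_support
          simp only [Walk.support_cons, List.tail_cons, List.nodup_cons, List.mem_cons] at hnd
          exact hnd.2.1 (by rw [hx]; exact hcend)
  intro v p hp
  have hcs : c ∈ p.support := by
    cases p with
    | nil => exact absurd rfl hp.ne_nil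
    | cons h q =>
      rcases hc _ _ h with rfl | rfl
      · exact Walk.start_mem_support _
      · rw [Walk.support_cons]
        exact List.mem_cons_of_mem _ (Walk.start_mem_support q)
  exact key (p.rotate c hcs) (hp.rotate hcs)

lemma star_connected' {V : Type} {G : SimpleGraph V} {c : V}
    (hc : ∀ v : V, v = c ∨ G.Adj c v) : G.Connected := by
  rw [connected_iff]
  refine ⟨fun u v => ?_, ⟨c⟩⟩
  have h : ∀ w : V, G.Reachable c w := by
    intro w
    rcases hc w with rfl | h
    · exact Reachable.refl _
    · exact h.reachable
  exact (h u).symm.trans (h v)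

lemma induce_connected_of_unique' {V : Type} (G : SimpleGraph V) (S : Set V) (a : V)
    (ha : a ∈ S) (huniq : ∀ b ∈ S, b = a) : (G.induce S).Connected := by
  rw [connected_iff]
  refine ⟨fun x y => ?_, ⟨⟨a, ha⟩⟩⟩
  have hxy : x = y := Subtype.ext ((huniq _ x.2).trans (huniq _ y.2).symm)
  exact hxy ▸ Reachable.refl x

/-- the Pohoata–Davies `n × n` grid is (isomorphic to) a subgraph of the
strong product of the star `K_{1,n}` with a path on `n+1` vertices; in particular of
`H ⊠ P` with `tw(H) ≤ 1`. -/
theorem stmt16 (n : ℕ) :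
    (∃ f : ((Fin n × Fin n) ⊕ Fin n) → ((Fin 1 ⊕ Fin n) × Fin (n + 1)),
      Function.Injective f ∧
      ∀ a b, (pdGrid n).Adj a b →
        (strongProd (completeBipartiteGraph (Fin 1) (Fin n))
          (SimpleGraph.pathGraph (n + 1))).Adj (f a) (f b)) ∧
    treewidth (completeBipartiteGraph (Fin 1) (Fin n)) ≤ 1 := by
  constructor
  · refine ⟨fun a => match a with
      | Sum.inl (i, j) => (Sum.inr j, ⟨(i : ℕ) + 1, Nat.succ_lt_succ i.isLt⟩)
      | Sum.inr i => (Sum.inl 0, ⟨(i : ℕ), Nat.lt_succ_of_lt i.isLt⟩), ?_, ?_⟩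
    · rintro (⟨i, j⟩ | i) (⟨i', j'⟩ | i') hab <;>
        simp only [Prod.mk.injEq, Sum.inr.injEq, Sum.inl.injEq, Fin.mk.injEq] at hab
      · obtain ⟨h1, h2⟩ := hab
        have hi : i = i' := Fin.ext (by omega)
        rw [hi, h1]
      · exact absurd hab.1 (by simp)
      · exact absurd hab.1 (by simp)
      · rw [Sum.inr.injEq]
        exact Fin.ext hab.2
    · intro a b hadj
      rw [pdGrid, fromRel_adj] at hadj
      obtain ⟨hne, hrel⟩ := hadj
      rw [strongProd, fromRel_adj]
      rcases hrel with (⟨i, j, hi, rfl, rfl⟩ | ⟨i, j, rfl, rfl⟩) |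
        (⟨i, j, hi, rfl, rfl⟩ | ⟨i, j, rfl, rfl⟩)
      · refine ⟨?_, Or.inl ⟨Or.inl rfl, Or.inr ?_⟩⟩
        · simp [Prod.ext_iff, Fin.ext_iff]
        · rw [pathGraph_adj]; simp
      · refine ⟨?_, Or.inl ⟨Or.inr ?_, Or.inr ?_⟩⟩
        · simp [Prod.ext_iff, Fin.ext_iff]
        · simp
        · rw [pathGraph_adj]; simp
      · refine ⟨?_, Or.inr ⟨Or.inl rfl, Or.inr ?_⟩⟩
        · simp [Prod.ext_iff, Fin.ext_iff]
        · rw [pathGraph_adj]; simp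
      · refine ⟨?_, Or.inr ⟨Or.inr ?_, Or.inr ?_⟩⟩
        · simp [Prod.ext_iff, Fin.ext_iff]
        · simp
        · rw [pathGraph_adj]; simp
  · have hmem : HasTreewidthAtMost (completeBipartiteGraph (Fin 1) (Fin n)) 1 := by
      refine ⟨Fin 1 ⊕ Fin n, completeBipartiteGraph (Fin 1) (Fin n),
        fun k => match k with
          | Sum.inl _ => {Sum.inl 0}
          | Sum.inr j => {Sum.inl 0, Sum.inr j}, ?_, ?_, ?_, ?_, ?_, ?_⟩
      · refine star_connected' (c := Sum.inl 0) ?_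
        rintro (a | b)
        · left; rw [Sum.inl.injEq]; exact Subsingleton.elim a 0
        · right; simp
      · refine star_acyclic' (c := Sum.inl 0) ?_
        rintro (a | b) (a' | b') h
        · simp at h
        · left; rw [Sum.inl.injEq]; exact Subsingleton.elim a 0
        · right; rw [Sum.inl.injEq]; exact Subsingleton.elim a' 0
        · simp at h
      · rintro (a | j)
        · exact ⟨Sum.inl 0, by simp [Subsingleton.elim a 0]⟩
        · exact ⟨Sum.inr j, by simp⟩
      · rintro (a | j) (a' | j') h
        · simp at h
        · exact ⟨Sum.inr j', by simp [Subsingleton.elim a 0]⟩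
        · exact ⟨Sum.inr j, by simp [Subsingleton.elim a' 0]⟩
        · simp at h
      · rintro (a | j)
        · have h0 : (Sum.inl a : Fin 1 ⊕ Fin n) ∈ ({Sum.inl 0} : Set (Fin 1 ⊕ Fin n)) := by
            simp [Subsingleton.elim a 0]
          refine star_connected' (c := ⟨Sum.inl 0, h0⟩) ?_
          rintro ⟨(b | j'), hb⟩
          · left
            exact Subtype.ext (by rw [Sum.inl.injEq]; exact Subsingleton.elim b 0)
          · right
            simp [completeBipartiteGraph]
        · refine induce_connected_of_unique' _ _ (Sum.inr j) (by simp) ?_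
          rintro (b | j') hb
          · simp only [Set.mem_setOf_eq] at hb
            simp at hb
          · simp only [Set.mem_setOf_eq] at hb
            simp only [Set.mem_insert_iff, Set.mem_singleton_iff, Sum.inr.injEq] at hb
            rcases hb with hb | hb
            · exact absurd hb (by simp)
            · rw [hb]
      · rintro (a | j)
        · simp
        · calc ({Sum.inl 0, Sum.inr j} : Set (Fin 1 ⊕ Fin n)).ncard
              ≤ ({Sum.inr j} : Set (Fin 1 ⊕ Fin n)).ncard + 1 := Set.ncard_insert_le _ _
          _ ≤ 1 + 1 := by rw [Set.ncard_singleton]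
    exact Nat.sInf_le hmem
end
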